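/- arXiv:math/0307061 — 5 statements merged into one kernel-verified Lean document; each statement's English description precedes it below -/
import Mathlib

section
/- For every nonnegative integer r, 2^(-2r) · √(r+1) ≤ (r!)² / (2r)! ≤ 2^(-2r) · √(π(r+1)). -/
open Real

lemma wallis_lower (r : ℕ) : ((r : ℝ) + 1) / (2 * r + 1) ≤ Real.Wallis.W r := by
  induction r with
  | zero => simp [Real.Wallis.W]
  | succ n ih =>
    rw [Real.Wallis.W_succ]
    have h1 : (0:ℝ) < 2 * n + 1 := by positivity
    have h3 : (0:ℝ) < 2 * n + 3 := by positivity
    have key : ((n:ℝ) + 1 + 1) / (2 * (n + 1) + 1) ≤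
        ((n:ℝ) + 1) / (2 * n + 1) * ((2 * n + 2) / (2 * n + 1) * ((2 * n + 2) / (2 * n + 3))) := by
      have : ((n:ℝ) + 1) / (2 * n + 1) * ((2 * n + 2) / (2 * n + 1) * ((2 * n + 2) / (2 * n + 3)))
          = ((n:ℝ)+1) * (2*n+2) * (2*n+2) / ((2*n+1) * ((2*n+1) * (2*n+3))) := by
        field_simp
      rw [this, div_le_div_iff₀ (by positivity) (by positivity)]
      nlinarith [sq_nonneg ((n:ℝ))]
    push_cast
    refine key.trans ?_
    have hmul : (0:ℝ) ≤ (2 * n + 2) / (2 * n + 1) * ((2 * n + 2) / (2 * n + 3)) := by positivity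
    exact mul_le_mul_of_nonneg_right ih hmul

theorem central_binomial_bounds (r : ℕ) :
    (2 : ℝ)⁻¹ ^ (2 * r) * Real.sqrt (r + 1) ≤
      (Nat.factorial r : ℝ) ^ 2 / Nat.factorial (2 * r) ∧
    (Nat.factorial r : ℝ) ^ 2 / Nat.factorial (2 * r) ≤
      (2 : ℝ)⁻¹ ^ (2 * r) * Real.sqrt (π * (r + 1)) := by
  have hfac : (0:ℝ) < (Nat.factorial (2 * r) : ℝ) := by exact_mod_cast Nat.factorial_pos _
  set c : ℝ := (Nat.factorial r : ℝ) ^ 2 / Nat.factorial (2 * r) with hc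
  set a : ℝ := 4 ^ r * c with ha
  have hcpos : 0 < c := by positivity
  have hapos : 0 < a := by positivity
  have hWr := Real.Wallis.W_eq_factorial_ratio r
  have ha2 : a ^ 2 = (2 * r + 1) * Real.Wallis.W r := by
    rw [hWr, ha, hc]
    have h2 : (2:ℝ) ^ (4 * r) = (4 ^ r) ^ 2 := by
      rw [show (4:ℝ) = 2^2 from by norm_num, ← pow_mul, ← pow_mul]; ring_nf
    field_simp
    rw [h2]
  have hlow : (r : ℝ) + 1 ≤ a ^ 2 := by
    have h := wallis_lower r
    have h1 : (0:ℝ) < 2 * r + 1 := by positivity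
    rw [ha2]
    calc (r : ℝ) + 1 = (2 * r + 1) * (((r:ℝ) + 1) / (2 * r + 1)) := by field_simp
    _ ≤ (2 * r + 1) * Real.Wallis.W r := by
        exact mul_le_mul_of_nonneg_left h (le_of_lt h1)
  have hhigh : a ^ 2 ≤ π * ((r : ℝ) + 1) := by
    rw [ha2]
    have h := Real.Wallis.W_le r
    have hWpos := Real.Wallis.W_pos r
    nlinarith [Real.pi_pos]
  have hsl : Real.sqrt ((r:ℝ) + 1) ≤ a := by
    have := Real.sqrt_le_sqrt hlow
    rwa [Real.sqrt_sq hapos.le] at this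
  have hsh : a ≤ Real.sqrt (π * ((r:ℝ) + 1)) := by
    rw [show a = Real.sqrt (a ^ 2) from (Real.sqrt_sq hapos.le).symm]
    exact Real.sqrt_le_sqrt hhigh
  have hpow : ((2:ℝ)⁻¹) ^ (2 * r) = ((4:ℝ) ^ r)⁻¹ := by
    rw [inv_pow, show (2:ℝ) ^ (2 * r) = 4 ^ r from by rw [pow_mul]; norm_num]
  have hcr : c = ((4:ℝ) ^ r)⁻¹ * a := by
    rw [ha]; field_simp
  constructor
  · rw [hpow, hcr]
    exact mul_le_mul_of_nonneg_left hsl (by positivity)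
  · rw [hpow, hcr]
    exact mul_le_mul_of_nonneg_left hsh (by positivity)
end

section
/- Let σ(x) = e^{-x/2} on (0,∞) and let p_n denote the orthonormal Laguerre polynomials for the weight σ². For z = e^{iθ} with |θ| < π/2 and s_θ = cos θ, the quantity N_{n,z} = ∫_0^∞ |p_n(zx) σ(zx)|² |z| dx satisfies N_{n,z} ≤ s_θ^{-2n-1} · 2^(4n+2) for all n ≥ 0. -/
/-!
Write `z = e^{iθ}` and `s = Re z = cos θ > 0`. Since `|b_{n,r}| = C(n,r) / r!` and
`t^r / r! ≤ (3/s)^r e^{st/3}`, the binomial theorem gives `|p_n(w)| ≤ (1 + 3/s)^n e^{s|w|/3}`,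
while `|e^{-zx/2}| = e^{-sx/2}`. The integrand is therefore at most `(1 + 3/s)^{2n} e^{-sx/3}`,
whose integral `(1 + 3/s)^{2n} · 3/s` is at most `(4/s)^{2n+1} = s^{-2n-1} 2^{4n+2}`.
-/

open Real MeasureTheory Finset Nat

noncomputable def laguerre (n : ℕ) (w : ℂ) : ℂ :=
  ∑ r ∈ range (n + 1),
    (-1 : ℂ) ^ (n - r) * (n ! : ℂ) / ((r ! : ℂ) ^ 2 * (n - r)!) * w ^ r

lemma pow_div_factorial_le_inv_pow_mul_exp {c x : ℝ} (hc : 0 < c) (hx : 0 ≤ x) (r : ℕ) :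
    x ^ r / r ! ≤ c⁻¹ ^ r * exp (c * x) := by
  have hx_eq : x ^ r = c⁻¹ ^ r * (c * x) ^ r := by
    rw [← mul_pow, inv_mul_cancel_left₀ hc.ne']
  rw [hx_eq, mul_div_assoc]
  exact mul_le_mul_of_nonneg_left (pow_div_factorial_le_exp _ (by positivity) r) (by positivity)

lemma sum_choose_mul_pow_div_factorial_le {c x : ℝ} (hc : 0 < c) (hx : 0 ≤ x) (n : ℕ) :
    ∑ r ∈ range (n + 1), (n.choose r : ℝ) * (x ^ r / r !) ≤ (1 + c⁻¹) ^ n * exp (c * x) :=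
  calc ∑ r ∈ range (n + 1), (n.choose r : ℝ) * (x ^ r / r !)
      ≤ ∑ r ∈ range (n + 1), (n.choose r : ℝ) * (c⁻¹ ^ r * exp (c * x)) := by
        gcongr with r
        exact pow_div_factorial_le_inv_pow_mul_exp hc hx r
    _ = (1 + c⁻¹) ^ n * exp (c * x) := by
        rw [add_comm (1 : ℝ), add_pow, sum_mul]
        exact sum_congr rfl fun r _ ↦ by ring

lemma norm_laguerre_coeff {n r : ℕ} (hr : r ≤ n) :
    ‖(-1 : ℂ) ^ (n - r) * (n ! : ℂ) / ((r ! : ℂ) ^ 2 * (n - r)!)‖ = n.choose r / r ! := by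
  have hfact : (n ! : ℝ) = n.choose r * r ! * (n - r)! := by
    exact_mod_cast (choose_mul_factorial_mul_factorial hr).symm
  simp only [norm_div, norm_mul, norm_pow, norm_neg, norm_one, one_pow, one_mul,
    Complex.norm_natCast]
  rw [hfact]
  field_simp

lemma norm_laguerre_le (n : ℕ) (w : ℂ) :
    ‖laguerre n w‖ ≤ ∑ r ∈ range (n + 1), (n.choose r : ℝ) * (‖w‖ ^ r / r !) := by
  refine (norm_sum_le _ _).trans (le_of_eq (sum_congr rfl fun r hr ↦ ?_))
  rw [norm_mul, norm_laguerre_coeff (Nat.lt_succ_iff.mp (mem_range.mp hr)), norm_pow]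
  ring

lemma norm_laguerre_le_mul_exp {c : ℝ} (hc : 0 < c) (n : ℕ) (w : ℂ) :
    ‖laguerre n w‖ ≤ (1 + c⁻¹) ^ n * exp (c * ‖w‖) :=
  (norm_laguerre_le n w).trans (sum_choose_mul_pow_div_factorial_le hc (norm_nonneg w) n)

lemma norm_laguerre_mul_exp_sq_le {z : ℂ} (hz : ‖z‖ = 1) (hre : 0 < z.re) (n : ℕ)
    {x : ℝ} (hx : 0 ≤ x) :
    ‖laguerre n (z * x) * Complex.exp (-(z * x) / 2)‖ ^ 2 ≤
      (1 + 3 / z.re) ^ (2 * n) * exp (-(z.re / 3) * x) := by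
  have hlag := norm_laguerre_le_mul_exp (c := z.re / 3) (by positivity) n (z * x)
  have hexp : ‖Complex.exp (-(z * x) / 2)‖ = exp (-(z.re * x) / 2) := by
    simp [Complex.norm_exp]
  rw [norm_mul, Complex.norm_real, hz, one_mul, norm_of_nonneg hx, inv_div] at hlag
  calc ‖laguerre n (z * x) * Complex.exp (-(z * x) / 2)‖ ^ 2
      ≤ ((1 + 3 / z.re) ^ n * exp (z.re / 3 * x) * exp (-(z.re * x) / 2)) ^ 2 := by
        rw [norm_mul, hexp]
        gcongr
    _ = (1 + 3 / z.re) ^ (2 * n) * exp (-(z.re / 3) * x) := by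
        rw [mul_pow, mul_pow, ← exp_nat_mul, ← exp_nat_mul, mul_assoc, ← exp_add, ← pow_mul,
          mul_comm 2 n]
        congr 2
        push_cast
        ring

lemma integral_norm_laguerre_mul_exp_sq_le {z : ℂ} (hz : ‖z‖ = 1) (hre : 0 < z.re) (n : ℕ) :
    ∫ x in Set.Ioi (0 : ℝ), ‖laguerre n (z * x) * Complex.exp (-(z * x) / 2)‖ ^ 2 ≤
      (1 + 3 / z.re) ^ (2 * n) * (3 / z.re) := by
  have hdecay : -(z.re / 3) < 0 := by linarith [div_pos hre three_pos]
  calc ∫ x in Set.Ioi (0 : ℝ), ‖laguerre n (z * x) * Complex.exp (-(z * x) / 2)‖ ^ 2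
      ≤ ∫ x in Set.Ioi (0 : ℝ), (1 + 3 / z.re) ^ (2 * n) * exp (-(z.re / 3) * x) := by
        refine integral_mono_of_nonneg (ae_of_all _ fun _ ↦ by positivity)
          ((integrableOn_exp_mul_Ioi hdecay 0).const_mul _) ?_
        exact (ae_restrict_iff' measurableSet_Ioi).mpr
          (ae_of_all _ fun x hx ↦ norm_laguerre_mul_exp_sq_le hz hre n hx.le)
    _ = (1 + 3 / z.re) ^ (2 * n) * (3 / z.re) := by
        rw [integral_const_mul, integral_exp_mul_Ioi hdecay, mul_zero, exp_zero]
        field_simp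

lemma one_add_three_div_pow_mul_le {s : ℝ} (hs : 0 < s) (hs1 : s ≤ 1) (n : ℕ) :
    (1 + 3 / s) ^ (2 * n) * (3 / s) ≤ s ^ (-(2 * (n : ℤ) + 1)) * 2 ^ (4 * n + 2) := by
  have h4 : 1 + 3 / s ≤ 4 / s := by
    rw [show 4 / s = 1 / s + 3 / s by ring]
    gcongr
    exact one_le_one_div hs hs1
  calc (1 + 3 / s) ^ (2 * n) * (3 / s) ≤ (4 / s) ^ (2 * n) * (4 / s) := by
        gcongr
        norm_num
    _ = s ^ (-(2 * (n : ℤ) + 1)) * 2 ^ (4 * n + 2) := by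
        rw [← pow_succ, div_pow, zpow_neg,
          show 2 * (n : ℤ) + 1 = ((2 * n + 1 : ℕ) : ℤ) by push_cast; ring, zpow_natCast, show (4 : ℝ) = 2 ^ 2 by norm_num, ← pow_mul]
        ring

/-- Upper bound on `N_{n,z}` for the rotated Laguerre weight `σ(x) = e^{-x/2}`. -/
theorem laguerre_upper_bound (θ : ℝ) (hθ : |θ| < π / 2) (n : ℕ) :
    (∫ x in Set.Ioi (0 : ℝ),
        ‖((∑ r ∈ Finset.range (n + 1),
                ((-1 : ℂ) ^ (n - r) * (Nat.factorial n) /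
                    ((Nat.factorial r) ^ 2 * Nat.factorial (n - r)) *
                  (Complex.exp (θ * Complex.I) * x) ^ r)) *
              Complex.exp (-(Complex.exp (θ * Complex.I) * x) / 2))‖ ^ 2 *
          ‖Complex.exp (θ * Complex.I)‖) ≤
      (Real.cos θ) ^ (-(2 * (n : ℤ) + 1)) * 2 ^ (4 * n + 2) := by
  have hcos : 0 < cos θ := cos_pos_of_mem_Ioo (abs_lt.mp hθ)
  have hz := Complex.norm_exp_ofReal_mul_I θ
  have hre := Complex.exp_ofReal_mul_I_re θ
  simp only [hz, mul_one]
  calc _ ≤ (1 + 3 / cos θ) ^ (2 * n) * (3 / cos θ) := by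
        have hbound := integral_norm_laguerre_mul_exp_sq_le hz (hre ▸ hcos) n
        rwa [hre] at hbound
    _ ≤ _ := one_add_three_div_pow_mul_le hcos (cos_le_one θ) n
end

section
/- Let σ be analytic and nonvanishing on the sector S = {z : |arg z| < α}, positive on (0,∞), with ∫_0^∞ x^n |σ(e^{iθ}x)|² dx < ∞ for all n ≥ 0 and |θ| < α. Suppose |σ(e^{iθ}r)| ≥ c_θ σ(s_θ r) for all r > 0, where c_θ > 0 and 0 < s_θ < 1. Let p_n be the orthonormal polynomials (with positive leading coefficient) for the weight σ² on (0,∞). Then for z = r e^{iθ}, N_{n,z} = |z| ∫_0^∞ |p_n(zx) σ(zx)|² dx ≥ c_θ² s_θ^{-(2n+1)}. -/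
/-
On the ray `arg z = θ` the hypothesis `‖σ(e^{iθ} t)‖ ≥ c σ(s t)` bounds `N_{n,z}` below by
`c² r ∫ ‖pₙ(z x)‖² σ(s r x)² dx`, and the substitution `u = s r x` turns this into
`c² s⁻¹ ∫ ‖pₙ(λ u)‖² σ(u)² du` with `λ = e^{iθ} / s`. Writing `pₙ(λ u) = λⁿ pₙ(u) + (lower degree)`,
orthonormality makes the last integral at least `‖λ‖^{2n} = s^{-2n}`. Complex polynomials are
handled through their real and imaginary parts, which are real polynomials on the real axis.
-/

open MeasureTheory Polynomial Set

namespace Polynomial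

noncomputable def rePart (Q : ℂ[X]) : ℝ[X] :=
  ∑ i ∈ Finset.range (Q.natDegree + 1), monomial i (Q.coeff i).re

noncomputable def imPart (Q : ℂ[X]) : ℝ[X] :=
  ∑ i ∈ Finset.range (Q.natDegree + 1), monomial i (Q.coeff i).im

@[simp]
lemma coeff_rePart (Q : ℂ[X]) (i : ℕ) : (rePart Q).coeff i = (Q.coeff i).re := by
  rcases lt_or_ge Q.natDegree i with hi | hi
  · simp [rePart, coeff_monomial, coeff_eq_zero_of_natDegree_lt hi, hi.not_ge]
  · simp [rePart, coeff_monomial, Nat.lt_succ_of_le hi]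

@[simp]
lemma coeff_imPart (Q : ℂ[X]) (i : ℕ) : (imPart Q).coeff i = (Q.coeff i).im := by
  rcases lt_or_ge Q.natDegree i with hi | hi
  · simp [imPart, coeff_monomial, coeff_eq_zero_of_natDegree_lt hi, hi.not_ge]
  · simp [imPart, coeff_monomial, Nat.lt_succ_of_le hi]

lemma natDegree_rePart_le (Q : ℂ[X]) : (rePart Q).natDegree ≤ Q.natDegree :=
  natDegree_le_iff_coeff_eq_zero.mpr fun i hi => by
    simp [coeff_eq_zero_of_natDegree_lt hi]

lemma natDegree_imPart_le (Q : ℂ[X]) : (imPart Q).natDegree ≤ Q.natDegree :=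
  natDegree_le_iff_coeff_eq_zero.mpr fun i hi => by
    simp [coeff_eq_zero_of_natDegree_lt hi]

lemma eval_rePart (Q : ℂ[X]) (x : ℝ) : (rePart Q).eval x = (Q.eval (x : ℂ)).re := by
  rw [eval_eq_sum_range' (Nat.lt_succ_of_le (natDegree_rePart_le Q)), eval_eq_sum_range,
    Complex.re_sum]
  simp [← Complex.ofReal_pow]

lemma eval_imPart (Q : ℂ[X]) (x : ℝ) : (imPart Q).eval x = (Q.eval (x : ℂ)).im := by
  rw [eval_eq_sum_range' (Nat.lt_succ_of_le (natDegree_imPart_le Q)), eval_eq_sum_range,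
    Complex.im_sum]
  simp [← Complex.ofReal_pow]

lemma norm_eval_ofReal_sq (Q : ℂ[X]) (x : ℝ) :
    ‖Q.eval (x : ℂ)‖ ^ 2 = (rePart Q).eval x ^ 2 + (imPart Q).eval x ^ 2 := by
  rw [Complex.sq_norm, Complex.normSq_apply, eval_rePart, eval_imPart]
  ring

lemma aeval_mul_eq_eval_comp (f : ℝ[X]) (l x : ℂ) :
    aeval (l * x) f = ((f.map (algebraMap ℝ ℂ)).comp (C l * X)).eval x := by
  rw [eval_comp, eval_map, aeval_def]
  simp

end Polynomial

section Orthonormal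

variable {μ : Measure ℝ} {w : ℝ → ℝ} {p : ℕ → ℝ[X]}
  (hw : ∀ V : ℝ[X], Integrable (fun x => V.eval x * w x) μ)
  (horth : ∀ m n, ∫ x, (p m).eval x * (p n).eval x * w x ∂μ = if m = n then 1 else 0)
  (hdeg : ∀ n, (p n).natDegree = n) (hlead : ∀ n, (p n).leadingCoeff ≠ 0)
include hw horth hdeg hlead

lemma integral_eval_mul_eval_mul_eq_zero_of_degree_lt {n : ℕ} {R : ℝ[X]} (hR : R.degree < n) :
    ∫ x, (p n).eval x * R.eval x * w x ∂μ = 0 := by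
  have hint : ∀ R : ℝ[X], Integrable (fun x => (p n).eval x * R.eval x * w x) μ := fun R => by
    simpa using hw (p n * R)
  let S : Sequence ℝ :=
    ⟨p, fun i => by rw [degree_eq_natDegree (leadingCoeff_ne_zero.mp (hlead i)), hdeg]⟩
  have hspan : R ∈ Submodule.span ℝ (S '' Iio n) := by
    rw [S.span_degreeLT fun i _ => (hlead i).isUnit]
    exact mem_degreeLT.mpr hR
  clear hR
  induction hspan using Submodule.span_induction with
  | mem R hR =>
    obtain ⟨k, hk, rfl⟩ := hR
    exact (horth n k).trans (if_neg (ne_of_gt hk))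
  | zero => simp
  | add R₁ R₂ _ _ h₁ h₂ =>
    simp only [eval_add, mul_add, add_mul]
    rw [integral_add (hint R₁) (hint R₂), h₁, h₂, add_zero]
  | smul a R _ h =>
    calc ∫ x, (p n).eval x * (a • R).eval x * w x ∂μ
        = ∫ x, a * ((p n).eval x * R.eval x * w x) ∂μ := by
          congr 1 with x
          simp only [eval_smul, smul_eq_mul]
          ring
      _ = 0 := by rw [integral_const_mul, h, mul_zero]

lemma sq_coeff_div_leadingCoeff_le_integral (hw0 : ∀ᵐ x ∂μ, 0 ≤ w x) {n : ℕ} {V : ℝ[X]}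
    (hV : V.natDegree ≤ n) :
    (V.coeff n / (p n).leadingCoeff) ^ 2 ≤ ∫ x, V.eval x ^ 2 * w x ∂μ := by
  set a := V.coeff n / (p n).leadingCoeff
  set R := V - C a * p n
  have hR : R.degree < n := by
    refine degree_lt_iff_coeff_zero _ _ |>.mpr fun j hj => ?_
    rcases (Nat.cast_le.mp hj).eq_or_lt with rfl | hj
    · have hlc : (p n).coeff n = (p n).leadingCoeff := by rw [leadingCoeff, hdeg]
      simp [R, a, hlc, div_mul_cancel₀ _ (hlead n)]
    · simp [R, coeff_eq_zero_of_natDegree_lt (hV.trans_lt hj),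
        coeff_eq_zero_of_natDegree_lt ((hdeg n).trans_lt hj)]
  have hsplit : ∀ x, V.eval x ^ 2 * w x = a ^ 2 * ((p n).eval x * (p n).eval x * w x)
      + 2 * a * ((p n).eval x * R.eval x * w x) + R.eval x ^ 2 * w x := by
    intro x
    simp only [R, eval_sub, eval_mul, eval_C]
    ring
  have horth_nn : ∫ x, (p n).eval x * (p n).eval x * w x ∂μ = 1 := by simp [horth]
  have horth_nR := integral_eval_mul_eval_mul_eq_zero_of_degree_lt hw horth hdeg hlead hR
  have hsq : 0 ≤ ∫ x, R.eval x ^ 2 * w x ∂μ :=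
    integral_nonneg_of_ae (hw0.mono fun x hx => mul_nonneg (sq_nonneg _) hx)
  calc a ^ 2 = ∫ x, a ^ 2 * ((p n).eval x * (p n).eval x * w x) ∂μ
        + ∫ x, 2 * a * ((p n).eval x * R.eval x * w x) ∂μ := by
        rw [integral_const_mul, integral_const_mul, horth_nn, horth_nR]; ring
    _ ≤ ∫ x, a ^ 2 * ((p n).eval x * (p n).eval x * w x) ∂μ
        + ∫ x, 2 * a * ((p n).eval x * R.eval x * w x) ∂μ + ∫ x, R.eval x ^ 2 * w x ∂μ :=
        le_add_of_nonneg_right hsq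
    _ = ∫ x, V.eval x ^ 2 * w x ∂μ := by
        have hnn : Integrable (fun x => a ^ 2 * ((p n).eval x * (p n).eval x * w x)) μ := by
          simpa using (hw (p n * p n)).const_mul (a ^ 2)
        have hnR : Integrable (fun x => 2 * a * ((p n).eval x * R.eval x * w x)) μ := by
          simpa using (hw (p n * R)).const_mul (2 * a)
        have hRR : Integrable (fun x => R.eval x ^ 2 * w x) μ :=
          (hw (R ^ 2)).congr (.of_forall fun x => by simp only [eval_pow])
        simp_rw [hsplit]
        rw [integral_add (hnn.add hnR : Integrable (fun x => _ + _) μ) hRR, integral_add hnn hnR]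

lemma sq_norm_coeff_div_leadingCoeff_le_integral (hw0 : ∀ᵐ x ∂μ, 0 ≤ w x) {n : ℕ} {Q : ℂ[X]}
    (hQ : Q.natDegree ≤ n) :
    (‖Q.coeff n‖ / (p n).leadingCoeff) ^ 2 ≤ ∫ x, ‖Q.eval (x : ℂ)‖ ^ 2 * w x ∂μ := by
  have hint : ∀ V : ℝ[X], Integrable (fun x => V.eval x ^ 2 * w x) μ := fun V =>
    (hw (V ^ 2)).congr (.of_forall fun x => by simp only [eval_pow])
  have hsplit : (‖Q.coeff n‖ / (p n).leadingCoeff) ^ 2 =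
      ((rePart Q).coeff n / (p n).leadingCoeff) ^ 2
        + ((imPart Q).coeff n / (p n).leadingCoeff) ^ 2 := by
    rw [coeff_rePart, coeff_imPart, div_pow, div_pow, div_pow, Complex.sq_norm,
      Complex.normSq_apply]
    ring
  simp_rw [norm_eval_ofReal_sq, add_mul]
  rw [hsplit, integral_add (hint _) (hint _)]
  exact add_le_add
    (sq_coeff_div_leadingCoeff_le_integral hw horth hdeg hlead hw0
      ((natDegree_rePart_le Q).trans hQ))
    (sq_coeff_div_leadingCoeff_le_integral hw horth hdeg hlead hw0
      ((natDegree_imPart_le Q).trans hQ))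

lemma pow_norm_le_integral_norm_aeval_mul_sq (hw0 : ∀ᵐ x ∂μ, 0 ≤ w x) (n : ℕ) (l : ℂ) :
    ‖l‖ ^ (2 * n) ≤ ∫ x, ‖aeval (l * x) (p n)‖ ^ 2 * w x ∂μ := by
  set Q := ((p n).map (algebraMap ℝ ℂ)).comp (C l * X)
  have hQ : Q.natDegree ≤ n := natDegree_le_iff_coeff_eq_zero.mpr fun j hj => by
    simp [Q, coeff_eq_zero_of_natDegree_lt ((hdeg n).trans_lt hj)]
  have hcoeff : (‖Q.coeff n‖ / (p n).leadingCoeff) ^ 2 = ‖l‖ ^ (2 * n) := by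
    have hlc : (p n).coeff n = (p n).leadingCoeff := by rw [leadingCoeff, hdeg]
    rw [comp_C_mul_X_coeff, coeff_map, hlc, norm_mul, norm_pow,
      div_pow, mul_pow, norm_algebraMap', Real.norm_eq_abs, sq_abs,
      mul_div_cancel_left₀ _ (pow_ne_zero 2 (hlead n)), ← pow_mul, mul_comm]
  simp_rw [aeval_mul_eq_eval_comp]
  exact hcoeff ▸ sq_norm_coeff_div_leadingCoeff_le_integral hw horth hdeg hlead hw0 hQ

end Orthonormal

section Moments

variable {A : ℝ → ℝ}

lemma integrable_eval_mul {μ : Measure ℝ} (hA : ∀ n : ℕ, Integrable (fun x => x ^ n * A x) μ)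
    (V : ℝ[X]) : Integrable (fun x => V.eval x * A x) μ := by
  have hsum : Integrable (fun x => ∑ i ∈ Finset.range (V.natDegree + 1),
      V.coeff i * (x ^ i * A x)) μ :=
    integrable_finsetSum _ fun i _ => (hA i).const_mul _
  refine hsum.congr (.of_forall fun x => ?_)
  simp only [eval_eq_sum_range, Finset.sum_mul, mul_assoc]

lemma integrableOn_eval_mul_comp_mul (hA : ∀ n : ℕ, IntegrableOn (fun x => x ^ n * A x) (Ioi 0))
    (V : ℝ[X]) {r : ℝ} (hr : 0 < r) :
    IntegrableOn (fun x => V.eval x * A (r * x)) (Ioi 0) := by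
  have h : IntegrableOn (fun x => (V.comp (C r⁻¹ * X)).eval x * A x) (Ioi (r * 0)) := by
    rw [mul_zero]
    exact integrable_eval_mul hA _
  rw [← integrableOn_Ioi_comp_mul_left_iff _ 0 hr] at h
  refine h.congr_fun (fun x _ => ?_) measurableSet_Ioi
  simp [inv_mul_cancel_left₀ hr.ne']

lemma integrableOn_norm_aeval_mul_sq_mul_comp_mul
    (hA : ∀ n : ℕ, IntegrableOn (fun x => x ^ n * A x) (Ioi 0)) (f : ℝ[X]) (l : ℂ) {r : ℝ}
    (hr : 0 < r) : IntegrableOn (fun x : ℝ => ‖aeval (l * x) f‖ ^ 2 * A (r * x)) (Ioi 0) := by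
  set Q := (f.map (algebraMap ℝ ℂ)).comp (C l * X)
  refine (integrableOn_eval_mul_comp_mul hA (rePart Q ^ 2 + imPart Q ^ 2) hr).congr_fun
    (fun x _ => ?_) measurableSet_Ioi
  beta_reduce
  rw [aeval_mul_eq_eval_comp, norm_eval_ofReal_sq, eval_add, eval_pow, eval_pow]

end Moments

section RotatedWeight

variable {σ : ℂ → ℂ}

lemma integrableOn_eval_mul_re_sq (him : ∀ x : ℝ, 0 < x → (σ x).im = 0)
    (hmom : ∀ n : ℕ, IntegrableOn (fun x : ℝ => x ^ n * ‖σ x‖ ^ 2) (Ioi 0)) (V : ℝ[X]) :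
    IntegrableOn (fun x => V.eval x * (σ x).re ^ 2) (Ioi 0) := by
  have h : IntegrableOn (fun x : ℝ => V.eval x * ‖σ x‖ ^ 2) (Ioi 0) := integrable_eval_mul hmom V
  refine h.congr_fun (fun x hx => ?_) measurableSet_Ioi
  beta_reduce
  rw [Complex.sq_norm, Complex.normSq_apply, him x hx]
  ring

lemma sq_mul_integral_le_integral_norm_aeval_mul_sq (f : ℝ[X]) {ω : ℂ} {c s r : ℝ} (hc : 0 ≤ c)
    (hs : 0 < s) (hr : 0 < r) (hpos : ∀ x : ℝ, 0 < x → 0 ≤ (σ x).re)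
    (hbasic : ∀ t : ℝ, 0 < t → c * (σ (s * t)).re ≤ ‖σ (ω * t)‖)
    (hmom : ∀ n : ℕ, IntegrableOn (fun x : ℝ => x ^ n * ‖σ (ω * x)‖ ^ 2) (Ioi 0)) :
    c ^ 2 * ∫ x : ℝ in Ioi 0, ‖aeval (r * ω * x) f‖ ^ 2 * (σ ↑(s * r * x)).re ^ 2 ≤
      ∫ x : ℝ in Ioi 0, ‖aeval (r * ω * x) f * σ (r * ω * x)‖ ^ 2 := by
  have hpoint : ∀ x ∈ Ioi (0 : ℝ),
      c ^ 2 * (‖aeval (r * ω * x) f‖ ^ 2 * (σ ↑(s * r * x)).re ^ 2) ≤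
        ‖aeval (r * ω * x) f * σ (r * ω * x)‖ ^ 2 := by
    intro x hx
    have hb := hbasic (r * x) (mul_pos hr hx)
    rw [show (s : ℂ) * ↑(r * x) = ↑(s * r * x) by push_cast; ring,
      show ω * ↑(r * x) = ↑r * ω * ↑x by push_cast; ring] at hb
    have hb0 : 0 ≤ c * (σ ↑(s * r * x)).re := mul_nonneg hc (hpos _ (mul_pos (mul_pos hs hr) hx))
    rw [norm_mul, mul_pow]
    calc c ^ 2 * (‖aeval (r * ω * x) f‖ ^ 2 * (σ ↑(s * r * x)).re ^ 2)
        = ‖aeval (r * ω * x) f‖ ^ 2 * (c * (σ ↑(s * r * x)).re) ^ 2 := by ring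
      _ ≤ ‖aeval (r * ω * x) f‖ ^ 2 * ‖σ (r * ω * x)‖ ^ 2 := by gcongr
  have hint : IntegrableOn (fun x : ℝ => ‖aeval (r * ω * x) f * σ (r * ω * x)‖ ^ 2) (Ioi 0) := by
    refine (integrableOn_norm_aeval_mul_sq_mul_comp_mul (A := fun t => ‖σ (ω * t)‖ ^ 2)
      hmom f (r * ω) hr).congr_fun (fun x _ => ?_) measurableSet_Ioi
    rw [norm_mul, mul_pow]
    push_cast
    ring_nf
  rw [← integral_const_mul]
  exact integral_mono_of_nonneg (.of_forall fun x => by positivity) hint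
    (ae_restrict_of_forall_mem measurableSet_Ioi hpoint)

lemma integral_norm_aeval_sq_mul_re_sq_comp_mul (f : ℝ[X]) (ω : ℂ) {s r : ℝ} (hs : 0 < s)
    (hr : 0 < r) :
    ∫ x : ℝ in Ioi 0, ‖aeval (r * ω * x) f‖ ^ 2 * (σ ↑(s * r * x)).re ^ 2 =
      (s * r)⁻¹ * ∫ u : ℝ in Ioi 0, ‖aeval (ω / s * u) f‖ ^ 2 * (σ u).re ^ 2 := by
  have hs' : (s : ℂ) ≠ 0 := by exact_mod_cast hs.ne'
  have h := integral_comp_mul_left_Ioi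
    (fun u : ℝ => ‖aeval (ω / s * u) f‖ ^ 2 * (σ u).re ^ 2) 0 (mul_pos hs hr)
  rw [mul_zero, smul_eq_mul] at h
  rw [← h]
  congr 1 with x
  rw [show ω / s * ↑(s * r * x) = r * ω * x by push_cast; field_simp]

end RotatedWeight

theorem main_lower_bound_general
    (σ : ℂ → ℂ) (α : ℝ) (hα : 0 < α)
    (hreal : ∀ x : ℝ, 0 < x → (σ x).im = 0 ∧ 0 < (σ x).re)
    (hint : ∀ (n : ℕ) (θ : ℝ), |θ| < α →
      IntegrableOn
        (fun x : ℝ => x ^ n * ‖σ (Complex.exp (θ * Complex.I) * x)‖ ^ 2)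
        (Set.Ioi (0 : ℝ)))
    (p : ℕ → Polynomial ℝ)
    (hdeg : ∀ n, (p n).natDegree = n)
    (hlead : ∀ n, 0 < (p n).leadingCoeff)
    (horth : ∀ m n,
      (∫ x in Set.Ioi (0 : ℝ), (p m).eval x * (p n).eval x * ((σ x).re) ^ 2) =
        if m = n then 1 else 0)
    (θ : ℝ) (hθ : |θ| < α) (c s : ℝ) (hc : 0 < c) (hs0 : 0 < s)
    (hbasic : ∀ r : ℝ, 0 < r →
      c * (σ (s * r)).re ≤ ‖σ (Complex.exp (θ * Complex.I) * r)‖)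
    (r : ℝ) (hr : 0 < r) (n : ℕ) :
    c ^ 2 * s ^ (-(2 * (n : ℤ) + 1)) ≤
      ‖(r : ℂ) * Complex.exp (θ * Complex.I)‖ *
        ∫ x in Set.Ioi (0 : ℝ),
          ‖Polynomial.aeval ((r : ℂ) * Complex.exp (θ * Complex.I) * x) (p n) *
                σ ((r : ℂ) * Complex.exp (θ * Complex.I) * x)‖ ^ 2 := by
  set e := Complex.exp (θ * Complex.I)
  have he : ‖e‖ = 1 := Complex.norm_exp_ofReal_mul_I θ
  have hw := integrableOn_eval_mul_re_sq (fun x hx => (hreal x hx).1)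
    (fun k => by simpa using hint k 0 (by simpa using hα))
  have hlower := pow_norm_le_integral_norm_aeval_mul_sq hw horth hdeg (fun k => (hlead k).ne')
    (.of_forall fun x => sq_nonneg _) n (e / s)
  have hcompare := sq_mul_integral_le_integral_norm_aeval_mul_sq (p n) hc.le hs0 hr
    (fun x hx => (hreal x hx).2.le) hbasic (hint · θ hθ)
  have hsubst := integral_norm_aeval_sq_mul_re_sq_comp_mul (σ := σ) (p n) e hs0 hr
  calc c ^ 2 * s ^ (-(2 * (n : ℤ) + 1)) = r * (c ^ 2 * ((s * r)⁻¹ * ‖e / s‖ ^ (2 * n))) := by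
        rw [norm_div, he, Complex.norm_real, Real.norm_of_nonneg hs0.le, div_pow, one_pow, zpow_neg]
        norm_cast
        field_simp
        ring
    _ ≤ r * (c ^ 2 * ((s * r)⁻¹ *
          ∫ u : ℝ in Ioi 0, ‖aeval (e / s * u) (p n)‖ ^ 2 * (σ u).re ^ 2)) := by gcongr
    _ ≤ r * ∫ x : ℝ in Ioi 0, ‖aeval (r * e * x) (p n) * σ (r * e * x)‖ ^ 2 := by
        rw [← hsubst]
        gcongr
    _ = ‖(r : ℂ) * e‖ * ∫ x : ℝ in Ioi 0, ‖aeval (r * e * x) (p n) * σ (r * e * x)‖ ^ 2 := by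
        rw [norm_mul, he, Complex.norm_real, Real.norm_of_nonneg hr.le, mul_one]

/-- Main lower bound: for a weight `σ` analytic on the sector `|arg z| < α`,
positive on `(0,∞)`, satisfying `|σ(e^{iθ}r)| ≥ c_θ σ(s_θ r)`, the rotated
orthonormal polynomials satisfy `N_{n,z} ≥ c_θ² s_θ^{-(2n+1)}`. -/
theorem main_lower_bound
    (σ : ℂ → ℂ) (α : ℝ) (hα : 0 < α)
    (hanal : AnalyticOn ℂ σ {z : ℂ | z ≠ 0 ∧ |Complex.arg z| < α})
    (hreal : ∀ x : ℝ, 0 < x → (σ x).im = 0 ∧ 0 < (σ x).re)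
    (hint : ∀ (n : ℕ) (θ : ℝ), |θ| < α →
      IntegrableOn
        (fun x : ℝ => x ^ n * ‖σ (Complex.exp (θ * Complex.I) * x)‖ ^ 2)
        (Set.Ioi (0 : ℝ)))
    (p : ℕ → Polynomial ℝ)
    (hdeg : ∀ n, (p n).natDegree = n)
    (hlead : ∀ n, 0 < (p n).leadingCoeff)
    (horth : ∀ m n,
      (∫ x in Set.Ioi (0 : ℝ), (p m).eval x * (p n).eval x * ((σ x).re) ^ 2) =
        if m = n then 1 else 0)
    (θ : ℝ) (hθ : |θ| < α) (c s : ℝ) (hc : 0 < c) (hs0 : 0 < s) (hs1 : s < 1)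
    (hbasic : ∀ r : ℝ, 0 < r →
      c * (σ (s * r)).re ≤ ‖σ (Complex.exp (θ * Complex.I) * r)‖)
    (r : ℝ) (hr : 0 < r) (n : ℕ) :
    c ^ 2 * s ^ (-(2 * (n : ℤ) + 1)) ≤
      ‖(r : ℂ) * Complex.exp (θ * Complex.I)‖ *
        ∫ x in Set.Ioi (0 : ℝ),
          ‖Polynomial.aeval ((r : ℂ) * Complex.exp (θ * Complex.I) * x) (p n) *
                σ ((r : ℂ) * Complex.exp (θ * Complex.I) * x)‖ ^ 2 :=
  main_lower_bound_general σ α hα hreal hint p hdeg hlead horth θ hθ c s hc hs0 hbasic r hr n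
end

section
/- Let z = e^{iθ} with |θ| < π/4 and s_θ = (cos 2θ)^{1/2}. Let p_{2n}(x) = k_{2n} H_{2n}(x) be the orthonormal Hermite polynomial of degree 2n for the weight e^{-x²} on ℝ. Then N_{2n,z} = ∫_{-∞}^∞ |p_{2n}(zx) e^{-z²x²/2}|² dx satisfies N_{2n,z} ≤ π (n+1)^{1/2} 2^{4n+2} s_θ^{-4n-1}. -/
open Real MeasureTheory
open scoped Nat

/-!
Put `c = cos 2θ > 0`. Since `|z| = 1`, `|p_{2n}(zx)| ≤ ∑ |b_{n,r}| x^{2r}` and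
`|e^{-z²x²/2}|² = e^{-cx²}`, so by Cauchy–Schwarz the integrand is at most
`(n+1) ∑ b_{n,r}² x^{4r} e^{-cx²}`. The Gaussian moments satisfy
`∫ x^{4r} e^{-cx²} = Γ(2r+1/2) c^{-2r-1/2} ≤ √π (2r)! c^{-2n-1/2}` (as `c ≤ 1`), and
`√π b_{n,r}² (2r)! = 4^r C(2n,2r) C(2n-2r,n-r) / 4^{n-r} ≤ 4^r C(2n,2r)`, and these are the
even-index terms of the binomial expansion of `(2+1)^{2n}`. Hence
`N_{2n,z} ≤ (n+1) 9^n s_θ^{-4n-1}`.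
-/

theorem integrable_pow_mul_exp_neg_mul_sq {c : ℝ} (hc : 0 < c) (k : ℕ) :
    Integrable fun x : ℝ => x ^ k * rexp (-c * x ^ 2) := by
  simpa [rpow_natCast] using integrable_rpow_mul_exp_neg_mul_sq hc (s := k)
    (by linarith [k.cast_nonneg (α := ℝ)])

theorem integral_pow_two_mul_mul_exp_neg_mul_sq {c : ℝ} (hc : 0 < c) (m : ℕ) :
    ∫ x : ℝ, x ^ (2 * m) * exp (-c * x ^ 2) = Gamma (m + 1 / 2) / c ^ ((m : ℝ) + 1 / 2) := by
  have heven : (fun x : ℝ => x ^ (2 * m) * exp (-c * x ^ 2))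
      = fun x => |x| ^ (2 * m) * exp (-c * |x| ^ 2) :=
    funext fun x => by rw [(even_two_mul m).pow_abs, sq_abs]
  rw [heven, integral_comp_abs (f := fun t => t ^ (2 * m) * exp (-c * t ^ 2))]
  have hIoi : ∫ x in Set.Ioi (0 : ℝ), x ^ (2 * m) * exp (-c * x ^ 2)
      = ∫ x in Set.Ioi (0 : ℝ), x ^ ((2 * m : ℕ) : ℝ) * exp (-c * x ^ (2 : ℝ)) :=
    setIntegral_congr_fun measurableSet_Ioi fun x _ => by rw [rpow_natCast, rpow_two]
  rw [hIoi, integral_rpow_mul_exp_neg_mul_rpow two_pos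
    (by linarith [(2 * m).cast_nonneg (α := ℝ)]) hc]
  have : ((2 * m : ℕ) + 1 : ℝ) / 2 = m + 1 / 2 := by push_cast; ring
  rw [neg_div, this, rpow_neg hc.le]
  field_simp

theorem Gamma_nat_add_half_le (m : ℕ) : Gamma (m + 1 / 2) ≤ √π * m ! := by
  induction m with
  | zero => simp [-one_div, Gamma_one_half_eq]
  | succ m ih =>
    have hpos : 0 < (m : ℝ) + 1 / 2 := by positivity
    calc Gamma ((m + 1 : ℕ) + 1 / 2) = (m + 1 / 2) * Gamma (m + 1 / 2) := by
          rw [← Gamma_add_one hpos.ne']; push_cast; ring_nf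
      _ ≤ (m + 1) * (√π * m !) :=
          mul_le_mul (by linarith) ih (Gamma_pos_of_pos hpos).le (by positivity)
      _ = √π * (m + 1)! := by push_cast [Nat.factorial_succ]; ring

theorem sqrt_zpow_neg_two_mul_add_one {c : ℝ} (hc : 0 ≤ c) (k : ℕ) :
    √c ^ (-(2 * (k : ℤ) + 1)) = (c ^ ((k : ℝ) + 1 / 2))⁻¹ := by
  rw [sqrt_eq_rpow, ← rpow_intCast, ← rpow_mul hc, ← rpow_neg hc]
  push_cast; ring_nf

theorem integral_pow_two_mul_mul_exp_neg_mul_sq_le {c : ℝ} (hc : 0 < c) (hc1 : c ≤ 1) {m k : ℕ}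
    (hmk : m ≤ k) :
    ∫ x : ℝ, x ^ (2 * m) * exp (-c * x ^ 2) ≤ √π * m ! * √c ^ (-(2 * (k : ℤ) + 1)) := by
  rw [integral_pow_two_mul_mul_exp_neg_mul_sq hc, sqrt_zpow_neg_two_mul_add_one hc.le,
    ← div_eq_mul_inv]
  have hmk' : (m : ℝ) ≤ k := by exact_mod_cast hmk
  exact div_le_div₀ (by positivity) (Gamma_nat_add_half_le m) (rpow_pos_of_pos hc _)
    (rpow_le_rpow_of_exponent_ge hc hc1 (by linarith))

open Complex in
theorem norm_cexp_neg_cexp_mul_I_sq_mul_sq_div_two (θ x : ℝ) :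
    ‖cexp (-(cexp (θ * I)) ^ 2 * x ^ 2 / 2)‖ = rexp (-Real.cos (2 * θ) * x ^ 2 / 2) := by
  rw [Complex.norm_exp, ← Complex.exp_nat_mul]
  have : ((2 : ℕ) : ℂ) * (θ * I) = (2 * θ : ℝ) * I := by push_cast; ring
  rw [this, show -cexp ((2 * θ : ℝ) * I) * x ^ 2 / 2 = cexp ((2 * θ : ℝ) * I) * (-x ^ 2 / 2 : ℝ) by
    push_cast; ring, re_mul_ofReal, exp_ofReal_mul_I_re]
  ring_nf

theorem norm_sum_ofReal_mul_pow_two_mul_le {z : ℂ} (hz : ‖z‖ = 1) (s : Finset ℕ) (a : ℕ → ℝ)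
    (x : ℝ) : ‖∑ r ∈ s, (a r : ℂ) * (z * x) ^ (2 * r)‖ ≤ ∑ r ∈ s, |a r| * x ^ (2 * r) := by
  refine (norm_sum_le _ _).trans (Finset.sum_le_sum fun r _ => ?_)
  rw [norm_mul, norm_pow, norm_mul, hz, one_mul, Complex.norm_real, Complex.norm_real,
    Real.norm_eq_abs, Real.norm_eq_abs, (even_two_mul r).pow_abs]

open Complex in
theorem sq_norm_sum_mul_cexp_le_card_mul_sum (a : ℕ → ℝ) (n : ℕ) (θ x : ℝ) :
    ‖(∑ r ∈ Finset.range (n + 1), (a r : ℂ) * (cexp (θ * I) * x) ^ (2 * r)) *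
        cexp (-(cexp (θ * I)) ^ 2 * x ^ 2 / 2)‖ ^ 2 ≤
      (n + 1) * ∑ r ∈ Finset.range (n + 1),
        a r ^ 2 * (x ^ (2 * (2 * r)) * rexp (-Real.cos (2 * θ) * x ^ 2)) := by
  have hz : ‖cexp (θ * I)‖ = 1 := Complex.norm_exp_ofReal_mul_I θ
  set c := Real.cos (2 * θ)
  calc _ ≤ ((∑ r ∈ Finset.range (n + 1), |a r| * x ^ (2 * r)) * rexp (-c * x ^ 2 / 2)) ^ 2 := by
        rw [norm_mul, norm_cexp_neg_cexp_mul_I_sq_mul_sq_div_two]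
        gcongr
        exact norm_sum_ofReal_mul_pow_two_mul_le hz _ a x
    _ = (∑ r ∈ Finset.range (n + 1), |a r| * x ^ (2 * r)) ^ 2 * rexp (-c * x ^ 2) := by
        rw [mul_pow, ← Real.exp_nat_mul]; congr 2; push_cast; ring
    _ ≤ (n + 1) * (∑ r ∈ Finset.range (n + 1), (|a r| * x ^ (2 * r)) ^ 2) * rexp (-c * x ^ 2) := by
        gcongr
        simpa using sq_sum_le_card_mul_sum_sq (s := Finset.range (n + 1))
          (f := fun r => |a r| * x ^ (2 * r))
    _ = _ := by
        rw [mul_assoc, Finset.sum_mul]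
        congr 1
        refine Finset.sum_congr rfl fun r _ => ?_
        rw [mul_pow, sq_abs, ← pow_mul]
        ring

open Complex in
theorem integral_sq_norm_sum_mul_cexp_le (a : ℕ → ℝ) (n : ℕ) {θ : ℝ} (hc : 0 < Real.cos (2 * θ)) :
    ∫ x : ℝ, ‖(∑ r ∈ Finset.range (n + 1), (a r : ℂ) * (cexp (θ * I) * x) ^ (2 * r)) *
        cexp (-(cexp (θ * I)) ^ 2 * x ^ 2 / 2)‖ ^ 2 ≤
      (n + 1) * ∑ r ∈ Finset.range (n + 1),
        a r ^ 2 * ∫ x : ℝ, x ^ (2 * (2 * r)) * rexp (-Real.cos (2 * θ) * x ^ 2) := by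
  have hint (r : ℕ) : Integrable fun x : ℝ =>
      a r ^ 2 * (x ^ (2 * (2 * r)) * rexp (-Real.cos (2 * θ) * x ^ 2)) :=
    (integrable_pow_mul_exp_neg_mul_sq hc _).const_mul _
  refine (integral_mono_of_nonneg (.of_forall fun x => by positivity)
    ((integrable_finsetSum _ fun r _ => hint r).const_mul _)
    (.of_forall fun x => sq_norm_sum_mul_cexp_le_card_mul_sum a n θ x)).trans_eq ?_
  rw [integral_const_mul, integral_finsetSum _ fun r _ => hint r]
  simp only [integral_const_mul]

noncomputable def hermiteEvenCoeff (n r : ℕ) : ℝ :=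
  (-1) ^ (n - r) * 2 ^ (2 * (r : ℤ) - n) * √((2 * n)! : ℝ) /
    (π ^ ((1 : ℝ) / 4) * (n - r)! * (2 * r)!)

theorem rpow_one_div_four_sq_eq_sqrt {x : ℝ} (hx : 0 ≤ x) : (x ^ ((1 : ℝ) / 4)) ^ 2 = √x := by
  rw [← rpow_natCast, ← rpow_mul hx, sqrt_eq_rpow]; norm_num

theorem sqrt_pi_mul_hermiteEvenCoeff_sq_mul_factorial {n r : ℕ} (hr : r ≤ n) :
    √π * hermiteEvenCoeff n r ^ 2 * (2 * r)! =
      4 ^ r * (2 * n).choose (2 * r) * (n - r).centralBinom / 4 ^ (n - r) := by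
  obtain ⟨t, rfl⟩ := Nat.exists_eq_add_of_le hr
  have h2 : (2 : ℝ) ^ (2 * (r : ℤ) - ((r + t : ℕ) : ℤ)) = 2 ^ r / 2 ^ t := by
    rw [show 2 * (r : ℤ) - ((r + t : ℕ) : ℤ) = r - t by push_cast; ring, zpow_sub₀ two_ne_zero,
      zpow_natCast, zpow_natCast]
  have hchoose : ((2 * (r + t)).choose (2 * r) : ℝ) * (2 * r)! * (2 * t)! = (2 * (r + t))! := by
    have := Nat.choose_mul_factorial_mul_factorial (show 2 * r ≤ 2 * (r + t) by omega)
    rw [show 2 * (r + t) - 2 * r = 2 * t by omega] at this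
    exact_mod_cast this
  have hcentral : (t.centralBinom : ℝ) * t ! * t ! = (2 * t)! := by
    have := Nat.choose_mul_factorial_mul_factorial (show t ≤ 2 * t by omega)
    rw [show 2 * t - t = t by omega] at this
    exact_mod_cast this
  have hsqrt : √((2 * (r + t))! : ℝ) ^ 2 = (2 * (r + t))! := sq_sqrt (by positivity)
  have hpi : (π ^ ((1 : ℝ) / 4)) ^ 2 = √π := rpow_one_div_four_sq_eq_sqrt pi_pos.le
  have hsign : ((-1 : ℝ) ^ t) ^ 2 = 1 := by rw [← pow_mul, mul_comm, pow_mul, neg_one_sq, one_pow]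
  simp only [hermiteEvenCoeff, Nat.add_sub_cancel_left, h2, div_pow, mul_pow, hsqrt, hpi, hsign]
  rw [← hchoose, ← hcentral]
  field_simp
  simp only [show (4 : ℝ) = 2 ^ 2 by norm_num, ← pow_mul]
  ring

theorem sum_range_four_pow_mul_choose_two_mul_le (n : ℕ) :
    ∑ r ∈ Finset.range (n + 1), 4 ^ r * (2 * n).choose (2 * r) ≤ 9 ^ n := by
  have hsub : (Finset.range (n + 1)).image (2 * ·) ⊆ Finset.range (2 * n + 1) := by
    intro k hk
    simp only [Finset.mem_image, Finset.mem_range] at hk ⊢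
    omega
  calc ∑ r ∈ Finset.range (n + 1), 4 ^ r * (2 * n).choose (2 * r)
      = ∑ k ∈ (Finset.range (n + 1)).image (2 * ·), 2 ^ k * (2 * n).choose k := by
        rw [Finset.sum_image fun a _ b _ h => by simpa using h]
        simp [pow_mul]
    _ ≤ ∑ k ∈ Finset.range (2 * n + 1), 2 ^ k * (2 * n).choose k :=
        Finset.sum_le_sum_of_subset hsub
    _ = 9 ^ n := by
        rw [show 9 ^ n = (2 + 1) ^ (2 * n) by rw [pow_mul]; norm_num, add_pow]
        simp [mul_comm]

theorem sum_sqrt_pi_mul_hermiteEvenCoeff_sq_mul_factorial_le (n : ℕ) :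
    ∑ r ∈ Finset.range (n + 1), √π * hermiteEvenCoeff n r ^ 2 * (2 * r)! ≤ 9 ^ n := by
  calc _ ≤ ∑ r ∈ Finset.range (n + 1), ((4 ^ r * (2 * n).choose (2 * r) : ℕ) : ℝ) := by
        refine Finset.sum_le_sum fun r hr => ?_
        rw [sqrt_pi_mul_hermiteEvenCoeff_sq_mul_factorial (Finset.mem_range_succ_iff.mp hr),
          div_le_iff₀ (by positivity)]
        push_cast
        gcongr
        exact_mod_cast (n - r).centralBinom_le_four_pow
    _ ≤ 9 ^ n := by exact_mod_cast sum_range_four_pow_mul_choose_two_mul_le n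

theorem succ_mul_nine_pow_le (n : ℕ) : (n + 1) * 9 ^ n ≤ 2 * 16 ^ n := by
  induction n with
  | zero => norm_num
  | succ n ih =>
    rcases n with _ | n
    · norm_num
    · calc (n + 1 + 1 + 1) * 9 ^ (n + 1 + 1) ≤ 16 * ((n + 1 + 1) * 9 ^ (n + 1)) := by
            rw [pow_succ]; nlinarith [Nat.zero_le (9 ^ (n + 1))]
        _ ≤ 2 * 16 ^ (n + 1 + 1) := by rw [pow_succ 16 (n + 1)]; omega

theorem succ_mul_nine_pow_le_pi_mul_sqrt (n : ℕ) :
    ((n + 1) * 9 ^ n : ℝ) ≤ π * √(n + 1) * 2 ^ (4 * n + 2) := by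
  have hsqrt : (1 : ℝ) ≤ √(n + 1) := one_le_sqrt.mpr (by linarith [n.cast_nonneg (α := ℝ)])
  calc ((n + 1) * 9 ^ n : ℝ) ≤ 2 * 16 ^ n := by exact_mod_cast succ_mul_nine_pow_le n
    _ ≤ 3 * 1 * (4 * 16 ^ n) := by linarith [pow_pos (by norm_num : (0 : ℝ) < 16) n]
    _ ≤ π * √(n + 1) * (4 * 16 ^ n) := by gcongr; exact pi_gt_three.le
    _ = π * √(n + 1) * 2 ^ (4 * n + 2) := by
        rw [show (2 : ℝ) ^ (4 * n + 2) = 4 * 16 ^ n by rw [pow_add, pow_mul]; norm_num; ring]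

/-- Upper bound on `N_{2n,z}` for the rotated Hermite weight, with
`p_{2n}(x) = ∑_{r=0}^n b_{n,r} x^{2r}`,
`b_{n,r} = (-1)^{n-r} 2^{2r-n} √((2n)!) / (π^{1/4} (n-r)! (2r)!)`. -/
theorem hermite_even_upper_bound (θ : ℝ) (hθ : |θ| < π / 4) (n : ℕ) :
    (∫ x : ℝ,
        ‖
            ((∑ r ∈ Finset.range (n + 1),
                (((-1 : ℝ) ^ (n - r) * (2 : ℝ) ^ (2 * (r : ℤ) - n) *
                      Real.sqrt (Nat.factorial (2 * n)) /
                    (π ^ ((1 : ℝ) / 4) * Nat.factorial (n - r) *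
                      Nat.factorial (2 * r)) : ℝ) : ℂ) *
                  (Complex.exp (θ * Complex.I) * x) ^ (2 * r)) *
              Complex.exp (-(Complex.exp (θ * Complex.I)) ^ 2 * x ^ 2 / 2))‖ ^ 2) ≤
      π * Real.sqrt (n + 1) * 2 ^ (4 * n + 2) *
        (Real.sqrt (Real.cos (2 * θ))) ^ (-(4 * (n : ℤ) + 1)) := by
  obtain ⟨hθl, hθu⟩ := abs_lt.mp hθ
  set c := Real.cos (2 * θ)
  have hc : 0 < c := cos_pos_of_mem_Ioo ⟨by linarith, by linarith⟩
  set S := √c ^ (-(4 * (n : ℤ) + 1))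
  have hS : S = √c ^ (-(2 * ((2 * n : ℕ) : ℤ) + 1)) := by simp only [S]; push_cast; ring_nf
  set b := hermiteEvenCoeff n
  calc _ ≤ (n + 1) * ∑ r ∈ Finset.range (n + 1),
          b r ^ 2 * ∫ x : ℝ, x ^ (2 * (2 * r)) * rexp (-c * x ^ 2) :=
        integral_sq_norm_sum_mul_cexp_le b n hc
    _ ≤ (n + 1) * ∑ r ∈ Finset.range (n + 1), b r ^ 2 * (√π * (2 * r)! * S) := by
        gcongr with r hr
        rw [hS]
        exact integral_pow_two_mul_mul_exp_neg_mul_sq_le hc (cos_le_one _)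
          (by have := Finset.mem_range_succ_iff.mp hr; omega)
    _ = (n + 1) * (∑ r ∈ Finset.range (n + 1), √π * b r ^ 2 * (2 * r)!) * S := by
        rw [mul_assoc, Finset.sum_mul]
        exact congrArg _ (Finset.sum_congr rfl fun r _ => by ring)
    _ ≤ (n + 1) * 9 ^ n * S := by
        gcongr
        exact sum_sqrt_pi_mul_hermiteEvenCoeff_sq_mul_factorial_le n
    _ ≤ π * √(n + 1) * 2 ^ (4 * n + 2) * S := by
        gcongr ?_ * S
        exact succ_mul_nine_pow_le_pi_mul_sqrt n
end

section
/- Let P_n be projections on a Hilbert space with P_m P_n = δ_{mn} P_n, let λ_n ∈ ℂ with Re λ_n = an + b for constants a > 0, b, and suppose s = limsup n^{-1} log ‖P_n‖ satisfies 0 < s < ∞. Then the series Σ_n e^{-λ_n t} P_n converges in operator norm for t > s/a and fails to converge in operator norm for 0 ≤ t < s/a. -/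
/-!
If `s` is the exponential growth rate of `‖P n‖` and `Re λ_n = a n + b`, then
`‖e^{-λ_n t} P_n‖ = e^{-b t} e^{-a t n} ‖P_n‖`. For `a t > s` pick `s < c < a t`: eventually
`‖P_n‖ ≤ e^{c n}`, so the terms are dominated by a convergent geometric series. For `0 ≤ a t < s`,
infinitely often `‖P_n‖ > e^{a t n}`, i.e. `‖e^{-λ_n t} P_n‖ > e^{-b t}`, so the terms do not tend
to zero and the partial sums cannot converge.
-/

open Filter Topology Finset

namespace Real

variable {α : Type*} {f : Filter α} {u : α → ℝ}

/-- `limsup` in `ℝ` takes the junk value `0` on sequences that are not bounded above, or not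
cobounded. -/
lemma isBoundedUnder_le_of_limsup_ne_zero (h : limsup u f ≠ 0) :
    f.IsBoundedUnder (· ≤ ·) u := by
  contrapose! h
  rw [limsup_eq, ← Real.sInf_empty]
  congr 1
  exact Set.eq_empty_iff_forall_notMem.2 fun x hx => h ⟨x, hx⟩

lemma isCoboundedUnder_le_of_limsup_ne_zero (h : limsup u f ≠ 0) :
    f.IsCoboundedUnder (· ≤ ·) u := by
  contrapose! h
  exact Real.sInf_of_not_bddBelow h

end Real

section GrowthRate

variable {g : ℕ → ℝ} {c : ℝ}

lemma eventually_le_exp_mul_of_limsup_inv_mul_log_lt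
    (hbdd : atTop.IsBoundedUnder (· ≤ ·) fun n : ℕ => (n : ℝ)⁻¹ * Real.log (g n))
    (h : limsup (fun n : ℕ => (n : ℝ)⁻¹ * Real.log (g n)) atTop < c) :
    ∀ᶠ n : ℕ in atTop, g n ≤ Real.exp (c * n) := by
  filter_upwards [eventually_lt_of_limsup_lt h hbdd, eventually_gt_atTop 0] with n hn hn0
  have hlog : Real.log (g n) < n * c := (inv_mul_lt_iff₀ (Nat.cast_pos.2 hn0)).1 hn
  calc g n ≤ Real.exp (Real.log (g n)) := Real.le_exp_log _
    _ ≤ Real.exp (c * n) := Real.exp_le_exp.2 (by linarith)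

lemma frequently_exp_mul_lt_of_lt_limsup_inv_mul_log (hg : ∀ n, 0 ≤ g n) (hc : 0 ≤ c)
    (hcobdd : atTop.IsCoboundedUnder (· ≤ ·) fun n : ℕ => (n : ℝ)⁻¹ * Real.log (g n))
    (h : c < limsup (fun n : ℕ => (n : ℝ)⁻¹ * Real.log (g n)) atTop) :
    ∃ᶠ n : ℕ in atTop, Real.exp (c * n) < g n := by
  refine ((frequently_lt_of_lt_limsup hcobdd h).and_eventually (eventually_gt_atTop 0)).mono ?_
  rintro n ⟨hn, hn0⟩
  have hlog : n * c < Real.log (g n) := (lt_inv_mul_iff₀ (Nat.cast_pos.2 hn0)).1 hn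
  -- `log 0 = 0 ≤ c n`, so the strict inequality forces `g n ≠ 0`
  have hpos : 0 < g n := (hg n).lt_of_ne fun h0 => by
    rw [← h0, Real.log_zero] at hlog
    exact hlog.not_ge (by positivity)
  rw [← Real.lt_log_iff_exp_lt hpos]
  linarith

end GrowthRate

section Series

variable {E : Type*}

lemma summable_of_eventually_norm_le_mul_exp [NormedAddCommGroup E] [CompleteSpace E]
    {v : ℕ → E} {C δ : ℝ} (hδ : δ < 0) (h : ∀ᶠ n in atTop, ‖v n‖ ≤ C * Real.exp (δ * n)) :
    Summable v := by
  have hgeom : Summable fun n : ℕ => C * Real.exp δ ^ n :=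
    (summable_geometric_of_lt_one (Real.exp_pos δ).le (Real.exp_lt_one_iff.2 hδ)).mul_left C
  refine Summable.of_norm_bounded_eventually_nat hgeom (h.mono fun n hn => ?_)
  rwa [← Real.exp_nat_mul, mul_comm (n : ℝ)]

lemma tendsto_zero_of_tendsto_sum_range [AddCommGroup E] [TopologicalSpace E]
    [IsTopologicalAddGroup E] {v : ℕ → E} {L : E}
    (h : Tendsto (fun N => ∑ n ∈ range N, v n) atTop (𝓝 L)) :
    Tendsto v atTop (𝓝 0) := by
  have hdiff := (h.comp (tendsto_add_atTop_nat 1)).sub h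
  rw [sub_self] at hdiff
  refine hdiff.congr fun n => ?_
  simp only [Function.comp_apply, sum_range_succ, add_sub_cancel_left]

lemma not_tendsto_sum_range_of_frequently_le_norm [SeminormedAddCommGroup E]
    {v : ℕ → E} {C : ℝ} (hC : 0 < C) (h : ∃ᶠ n in atTop, C ≤ ‖v n‖) (L : E) :
    ¬Tendsto (fun N => ∑ n ∈ range N, v n) atTop (𝓝 L) := fun hL =>
  have hsmall : ∀ᶠ n in atTop, ‖v n‖ < C :=
    (tendsto_zero_iff_norm_tendsto_zero.1 (tendsto_zero_of_tendsto_sum_range hL)).eventually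
      (eventually_lt_nhds hC)
  h (hsmall.mono fun _ hn => hn.not_ge)

end Series

theorem spectral_expansion_convergence_general
    {H : Type*} [NormedAddCommGroup H] [InnerProductSpace ℂ H] [CompleteSpace H]
    (P : ℕ → H →L[ℂ] H)
    (lam : ℕ → ℂ) (a b : ℝ) (ha : 0 < a)
    (hlam : ∀ n, (lam n).re = a * n + b)
    (s : ℝ)
    (hs : Filter.limsup (fun n : ℕ => (n : ℝ)⁻¹ * Real.log ‖P n‖) Filter.atTop = s)
    (hs0 : 0 < s) :
    ∀ t : ℝ,
      (t > s / a →
        ∃ L : H →L[ℂ] H,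
          Filter.Tendsto
            (fun N => ∑ n ∈ Finset.range N, Complex.exp (-(lam n) * t) • P n)
            Filter.atTop (nhds L)) ∧
      (0 ≤ t → t < s / a →
        ¬∃ L : H →L[ℂ] H,
          Filter.Tendsto
            (fun N => ∑ n ∈ Finset.range N, Complex.exp (-(lam n) * t) • P n)
            Filter.atTop (nhds L)) := by
  intro t
  have hs_ne : limsup (fun n : ℕ => (n : ℝ)⁻¹ * Real.log ‖P n‖) atTop ≠ 0 := hs ▸ hs0.ne'
  have hterm : ∀ n : ℕ, ‖Complex.exp (-(lam n) * t) • P n‖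
      = Real.exp (-b * t) * (Real.exp (-(a * t * n)) * ‖P n‖) := fun n => by
    rw [norm_smul, Complex.norm_exp, ← mul_assoc, ← Real.exp_add]
    simp only [neg_mul, Complex.neg_re, Complex.mul_re, Complex.ofReal_re, Complex.ofReal_im,
      mul_zero, sub_zero, hlam]
    ring_nf
  refine ⟨fun ht => ?_, fun ht0 ht => ?_⟩
  · obtain ⟨c, hsc, hct⟩ := exists_between ((div_lt_iff₀' ha).1 ht)
    have hP := eventually_le_exp_mul_of_limsup_inv_mul_log_lt
      (Real.isBoundedUnder_le_of_limsup_ne_zero hs_ne) (hs ▸ hsc)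
    refine ⟨_, (summable_of_eventually_norm_le_mul_exp (C := Real.exp (-b * t)) (δ := c - a * t)
      (by linarith) (hP.mono fun n hn => ?_)).hasSum.tendsto_sum_nat⟩
    rw [hterm, sub_mul, sub_eq_neg_add, Real.exp_add]
    gcongr
  · rintro ⟨L, hL⟩
    have hP := frequently_exp_mul_lt_of_lt_limsup_inv_mul_log (fun n => norm_nonneg (P n))
      (by positivity) (Real.isCoboundedUnder_le_of_limsup_ne_zero hs_ne)
      (hs ▸ (lt_div_iff₀' ha).1 ht)
    refine not_tendsto_sum_range_of_frequently_le_norm (Real.exp_pos (-b * t))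
      (hP.mono fun n hn => ?_) L hL
    rw [hterm, le_mul_iff_one_le_right (Real.exp_pos _), Real.exp_neg,
      one_le_inv_mul₀ (Real.exp_pos _)]
    exact hn.le

/-- Norm convergence/divergence of the spectral expansion `∑ e^{-λ_n t} P_n`. -/
theorem spectral_expansion_convergence
    {H : Type*} [NormedAddCommGroup H] [InnerProductSpace ℂ H] [CompleteSpace H]
    (P : ℕ → H →L[ℂ] H)
    (hproj : ∀ m n, (P m).comp (P n) = if m = n then P n else 0)
    (lam : ℕ → ℂ) (a b : ℝ) (ha : 0 < a)
    (hlam : ∀ n, (lam n).re = a * n + b)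
    (s : ℝ)
    (hs : Filter.limsup (fun n : ℕ => (n : ℝ)⁻¹ * Real.log ‖P n‖) Filter.atTop = s)
    (hs0 : 0 < s) :
    ∀ t : ℝ,
      (t > s / a →
        ∃ L : H →L[ℂ] H,
          Filter.Tendsto
            (fun N => ∑ n ∈ Finset.range N, Complex.exp (-(lam n) * t) • P n)
            Filter.atTop (nhds L)) ∧
      (0 ≤ t → t < s / a →
        ¬∃ L : H →L[ℂ] H,
          Filter.Tendsto
            (fun N => ∑ n ∈ Finset.range N, Complex.exp (-(lam n) * t) • P n)
            Filter.atTop (nhds L)) :=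
  spectral_expansion_convergence_general P lam a b ha hlam s hs hs0
end
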